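/- Let (C, J) be a small site. For every bounded-below cochain complex X of sheaves of abelian groups on (C, J) there exists a bounded-below cochain complex P of torsion-free (equivalently, flat) sheaves of abelian groups and a quasi-isomorphism P ⟶ X. -/

import Mathlib

/-!
Choose epimorphisms `T i ⟶ X i` from torsion-free sheaves (sheafifications of free presheaves on
the sections), with `T i = X i` whenever `X i = 0`. The sum `F` of the disks `T i = T i` maps onto
`X`, with kernel `K`. Torsion-freeness passes to subobjects and finite products, so the mapping
cone of `K ⟶ F`, which is quasi-isomorphic to `F / K ≅ X`, has torsion-free terms
`K (i + 1) ⊞ F i`; it vanishes below one degree less than `X` does.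
-/

open CategoryTheory Limits Opposite

universe u

variable {C : Type u} [SmallCategory C] (J : GrothendieckTopology C)

def SheafTorsionFree (F : Sheaf J AddCommGrpCat.{u}) : Prop :=
  ∀ n : ℤ, 1 ≤ n → Mono (n • 𝟙 F)

section
variable {A : Type*} [Category A] [Preadditive A]

lemma mono_zsmul_id_of_mono {F G : A} (i : F ⟶ G) [Mono i] (n : ℤ) [Mono (n • 𝟙 G)] :
    Mono (n • 𝟙 F) :=
  have : Mono ((n • 𝟙 F) ≫ i) := by simpa using mono_comp i (n • 𝟙 G)
  mono_of_mono _ i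

lemma mono_zsmul_id_of_isLimit {K : Type*} [Category K] {D : K ⥤ A} {c : Cone D}
    (hc : IsLimit c) (n : ℤ) [∀ k, Mono (n • 𝟙 (D.obj k))] : Mono (n • 𝟙 c.pt) where
  right_cancellation g h e := hc.hom_ext fun k => by
    rw [← cancel_mono (n • 𝟙 (D.obj k))]
    simpa using e =≫ c.π.app k
end

namespace CochainComplex
variable {A : Type*} [Category A] [Preadditive A] [HasBinaryBiproducts A]

/-- The sum over `i` of the complexes `T i ⟶ T i` (the identity) placed in degrees `i` and `i + 1`:
chain maps out of it are arbitrary families `T i ⟶ X.X i`. -/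
noncomputable def sumOfDisks (T : ℤ → A) : CochainComplex A ℤ :=
  of (fun i => T i ⊞ T (i - 1))
    (fun i => biprod.fst ≫ eqToHom (by rw [add_sub_cancel_right]) ≫ biprod.inr) (by simp)

/-- The sum over `i` of the complexes `T i ⟶ T i` (the identity) placed in degrees `i` and `i + 1`:
chain maps out of it are arbitrary families `T i ⟶ X.X i`. -/
noncomputable def sumOfDisksDesc {X : CochainComplex A ℤ} {T : ℤ → A} (t : ∀ i, T i ⟶ X.X i) :
    sumOfDisks T ⟶ X where
  f i := biprod.desc (t i) (t (i - 1) ≫ X.d (i - 1) i)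
  comm' := by
    rintro i _ rfl
    simp only [sumOfDisks, of_d]
    ext
    · have key : ∀ j (h : j = i),
          t i ≫ X.d i (i + 1) = eqToHom (congrArg T h.symm) ≫ t j ≫ X.d j (i + 1) := by
        rintro _ rfl; simp
      simpa using key _ (add_sub_cancel_right i 1)
    · simp

lemma epi_sumOfDisksDesc {X : CochainComplex A ℤ} {T : ℤ → A} (t : ∀ i, T i ⟶ X.X i)
    [∀ i, Epi (t i)] : Epi (sumOfDisksDesc t) :=
  HomologicalComplex.epi_of_epi_f _ fun i =>
    have : Epi (biprod.inl ≫ (sumOfDisksDesc t).f i) := by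
      simpa [sumOfDisksDesc] using (inferInstance : Epi (t i))
    epi_of_epi biprod.inl _

lemma isZero_sumOfDisks_X (T : ℤ → A) (i : ℤ) (h : IsZero (T i)) (h' : IsZero (T (i - 1))) :
    IsZero ((sumOfDisks T).X i) := by
  simp [sumOfDisks, biprod_isZero_iff, h, h']

end CochainComplex

namespace CategoryTheory.ObjectProperty
variable {A : Type*} [Category A] (P : ObjectProperty A)
  [P.IsClosedUnderSubobjects]

lemma exists_epi_isZero_imp (hP : ∀ Y : A, ∃ (T : A) (t : T ⟶ Y), P T ∧ Epi t) (Y : A) :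
    ∃ (T : A) (t : T ⟶ Y), P T ∧ Epi t ∧ (IsZero Y → IsZero T) := by
  by_cases hY : IsZero Y
  · obtain ⟨T, -, hT, -⟩ := hP Y
    have := hY.mono (hY.to_ T)
    exact ⟨Y, 𝟙 Y, P.prop_of_mono (hY.to_ T) hT, inferInstance, fun _ => hY⟩
  · obtain ⟨T, t, hT, ht⟩ := hP Y
    exact ⟨T, t, hT, ht, fun h => absurd h hY⟩

end CategoryTheory.ObjectProperty

namespace CochainComplex
variable {A : Type*} [Category A] [Abelian A] (P : ObjectProperty A)
  [P.IsClosedUnderSubobjects] [P.IsClosedUnderBinaryProducts]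

theorem exists_prop_quasiIso_of_isStrictlyGE
    (hP : ∀ Y : A, ∃ (T : A) (t : T ⟶ Y), P T ∧ Epi t) (X : CochainComplex A ℤ) (n : ℤ)
    [X.IsStrictlyGE n] :
    ∃ (K : CochainComplex A ℤ) (f : K ⟶ X), K.IsStrictlyGE (n - 1) ∧ (∀ i, P (K.X i)) ∧
      QuasiIso f := by
  choose T t hT _ hTzero using fun i => P.exists_epi_isZero_imp hP (X.X i)
  have : Epi (sumOfDisksDesc t) := epi_sumOfDisksDesc t
  let S := ShortComplex.mk _ _ (kernel.condition (sumOfDisksDesc t))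
  have hS : S.ShortExact := { exact := ShortComplex.exact_kernel _ }
  have prop_biprod {Y Z : A} (hY : P Y) (hZ : P Z) : P (Y ⊞ Z) :=
    P.prop_of_isLimit_binaryFan (BinaryBiproduct.isLimit Y Z) hY hZ
  have hF (i : ℤ) : P ((sumOfDisks T).X i) := prop_biprod (hT i) (hT (i - 1))
  refine ⟨mappingCone S.f, mappingCone.descShortComplex S, ?_, fun i => ?_,
    mappingCone.quasiIso_descShortComplex hS⟩
  · rw [isStrictlyGE_iff]
    intro i hi
    have hF0 (j : ℤ) (hj : j ≤ i + 1) : IsZero ((sumOfDisks T).X j) :=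
      isZero_sumOfDisks_X T j (hTzero _ (X.isZero_of_isStrictlyGE n j))
        (hTzero _ (X.isZero_of_isStrictlyGE n _))
    rw [mappingCone.isZero_X_iff]
    exact ⟨(hF0 (i + 1) le_rfl).of_mono (S.f.f (i + 1)), hF0 i (by lia)⟩
  · exact P.prop_of_iso (HomologicalComplex.homotopyCofiber.XIsoBiprod S.f i (i + 1) rfl).symm
      (prop_biprod (P.prop_of_mono (S.f.f (i + 1)) (hF _)) (hF i))

end CochainComplex

instance FreeAbelianGroup.instIsAddTorsionFree (S : Type*) :
    IsAddTorsionFree (FreeAbelianGroup S) :=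
  (FreeAbelianGroup.equivFinsupp S).injective.isAddTorsionFree
    (FreeAbelianGroup.equivFinsupp S).toAddMonoidHom

namespace AddCommGrpCat

lemma mono_zsmul_id_free (S : Type u) {n : ℤ} (hn : n ≠ 0) : Mono (n • 𝟙 (free.obj S)) := by
  rw [mono_iff_injective]
  exact zsmul_right_injective (G := FreeAbelianGroup S) hn

lemma epi_adj_counit_app (G : AddCommGrpCat.{u}) : Epi (adj.counit.app G) :=
  have : IsSplitEpi ((forget AddCommGrpCat).map (adj.counit.app G)) :=
    ⟨⟨⟨_, adj.right_triangle_components G⟩⟩⟩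
  (forget AddCommGrpCat).epi_of_epi_map inferInstance

end AddCommGrpCat

instance : ObjectProperty.IsClosedUnderSubobjects (SheafTorsionFree J) where
  prop_of_mono i _ hG n hn :=
    have := hG n hn
    mono_zsmul_id_of_mono i n

instance (K : Type*) [Category K] :
    ObjectProperty.IsClosedUnderLimitsOfShape (SheafTorsionFree J) K where
  limitsOfShape_le := by
    rintro F ⟨p⟩ n hn
    have := fun k => p.prop_diag_obj k n hn
    exact mono_zsmul_id_of_isLimit p.isLimit n

lemma exists_sheafTorsionFree_epi (F : Sheaf J AddCommGrpCat.{u}) :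
    ∃ (T : Sheaf J AddCommGrpCat.{u}) (t : T ⟶ F), SheafTorsionFree J T ∧ Epi t := by
  let P := F.obj ⋙ forget AddCommGrpCat ⋙ AddCommGrpCat.free
  let ε : P ⟶ F.obj := F.obj.whiskerLeft AddCommGrpCat.adj.counit ≫ F.obj.rightUnitor.hom
  have (U : Cᵒᵖ) : Epi (ε.app U) := by
    simpa [ε] using AddCommGrpCat.epi_adj_counit_app (F.obj.obj U)
  have : Epi ε := NatTrans.epi_of_epi_app ε
  refine ⟨(presheafToSheaf J _).obj P, ((sheafificationAdjunction J _).homEquiv P F).symm ε,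
    fun n hn => ?_, ?_⟩
  · have (U : Cᵒᵖ) : Mono ((n • 𝟙 P).app U) := by
      rw [NatTrans.app_zsmul]
      exact AddCommGrpCat.mono_zsmul_id_free _ (by lia)
    have : Mono (n • 𝟙 P) := NatTrans.mono_of_mono_app _
    simpa using (presheafToSheaf J _).map_mono (n • 𝟙 P)
  · rw [Adjunction.homEquiv_counit]
    have := Functor.preservesEpimorphisms_of_adjunction (sheafificationAdjunction J AddCommGrpCat)
    infer_instance

theorem exists_boundedBelow_torsionFree_quasiIso
    (X : CochainComplex (Sheaf J AddCommGrpCat.{u}) ℤ)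
    (hX : ∃ n : ℤ, ∀ i < n, IsZero (X.X i)) :
    ∃ (P : CochainComplex (Sheaf J AddCommGrpCat.{u}) ℤ),
      (∃ m : ℤ, ∀ i < m, IsZero (P.X i)) ∧
      (∀ i : ℤ, SheafTorsionFree J (P.X i)) ∧
      ∃ (f : P ⟶ X), QuasiIso f := by
  obtain ⟨n, hn⟩ := hX
  have : X.IsStrictlyGE n := (X.isStrictlyGE_iff n).2 hn
  obtain ⟨P, f, _, hPtf, hf⟩ := CochainComplex.exists_prop_quasiIso_of_isStrictlyGE
    (SheafTorsionFree J) (exists_sheafTorsionFree_epi J) X n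
  exact ⟨P, ⟨n - 1, fun i hi => P.isZero_of_isStrictlyGE (n - 1) i hi⟩, hPtf, f, hf⟩
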